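/- arXiv:1304.4441 — 4 statements merged into one kernel-verified Lean document; each statement's English description precedes it below -/
import Mathlib

section
/- For any real numbers x, ε₁, ε₂, the product (e^{x+ε₁}/(1+e^{x+ε₁})) · (1/(1+e^{x+ε₂})) is at most e^{-|x|+|ε₁|+|ε₂|}. -/
/-!
Both factors are values of the logistic function `σ t = eᵗ / (1 + eᵗ)`, namely `σ (x + ε₁)` and
`σ (-(x + ε₂))`, and `σ t ≤ min 1 eᵗ = e^(min t 0)`. For `x ≥ 0` the second factor gives
`e^(-x - ε₂)`, for `x < 0` the first gives `e^(x + ε₁)`; either exponent is at most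
`-|x| + |ε₁| + |ε₂|`.
-/

namespace Real

lemma exp_div_one_add_exp (t : ℝ) : exp t / (1 + exp t) = sigmoid t := by
  rw [sigmoid_def, exp_neg]
  field_simp
  ring

lemma one_div_one_add_exp (t : ℝ) : 1 / (1 + exp t) = sigmoid (-t) := by
  rw [sigmoid_def, neg_neg, one_div]

lemma sigmoid_le_exp (t : ℝ) : sigmoid t ≤ exp t := by
  calc sigmoid t = sigmoid (-t) * exp t := by
        simpa only [neg_neg] using (sigmoid_mul_rexp_neg (-t)).symm
    _ ≤ 1 * exp t := by gcongr; exact sigmoid_le_one _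
    _ = exp t := one_mul _

lemma sigmoid_le_exp_min (t : ℝ) : sigmoid t ≤ exp (min t 0) := by
  rcases le_total t 0 with ht | ht
  · simpa [min_eq_left ht] using sigmoid_le_exp t
  · simpa [min_eq_right ht] using sigmoid_le_one t

end Real

lemma min_add_min_neg_le (x ε₁ ε₂ : ℝ) :
    min (x + ε₁) 0 + min (-(x + ε₂)) 0 ≤ -|x| + |ε₁| + |ε₂| := by
  rcases abs_cases x with ⟨hx, -⟩ | ⟨hx, -⟩ <;>
    linarith [min_le_left (x + ε₁) 0, min_le_right (x + ε₁) 0, min_le_left (-(x + ε₂)) 0,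
      min_le_right (-(x + ε₂)) 0, le_abs_self ε₁, neg_abs_le ε₂, abs_nonneg ε₁, abs_nonneg ε₂]

open Real in
theorem logistic_pair_bound (x ε₁ ε₂ : ℝ) :
    (Real.exp (x + ε₁) / (1 + Real.exp (x + ε₁))) * (1 / (1 + Real.exp (x + ε₂)))
      ≤ Real.exp (-|x| + |ε₁| + |ε₂|) := by
  rw [exp_div_one_add_exp, one_div_one_add_exp]
  calc sigmoid (x + ε₁) * sigmoid (-(x + ε₂))
      ≤ exp (min (x + ε₁) 0) * exp (min (-(x + ε₂)) 0) :=
        mul_le_mul (sigmoid_le_exp_min _) (sigmoid_le_exp_min _) (sigmoid_nonneg _)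
          (exp_nonneg _)
    _ = exp (min (x + ε₁) 0 + min (-(x + ε₂)) 0) := (exp_add _ _).symm
    _ ≤ exp (-|x| + |ε₁| + |ε₂|) := exp_le_exp.mpr (min_add_min_neg_le x ε₁ ε₂)
end

section
/- There exists a constant K > 0 such that for all real θ₁, θ₂, the triple integral ∫₀^∞ ∫_{-∞}^{∞} ∫_{-∞}^{∞} τ^{-1/2} e^{-τ(η₁²+η₂²)} e^{-(|θ₁+η₁|+|θ₁-η₁|+|θ₂+η₂|+|θ₂-η₂|)} dη₁ dη₂ dτ ≤ K e^{-(|θ₁|+|θ₂|)}. -/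
/-
Since `|θ + η| + |θ - η| ≥ |θ| + |η|`, each `η`-integral is at most `e^{-|θ|}` times both
`∫ e^{-|η|} = 2` and the Gaussian integral `√(π / τ)`. The `τ`-integrand is therefore at most
`e^{-(|θ₁| + |θ₂|)} τ^{-1/2} min 4 (π / τ)`, which is integrable on `(0, ∞)`: like `τ^{-1/2}` near
`0` and like `τ^{-3/2}` at infinity. This gives `K = 8 + 2π`.
-/

open MeasureTheory Set Real

lemma abs_add_abs_le_abs_add_add_abs_sub (x y : ℝ) : |x| + |y| ≤ |x + y| + |x - y| := by
  cases abs_cases x <;> cases abs_cases y <;> cases abs_cases (x + y) <;>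
    cases abs_cases (x - y) <;> linarith

lemma integrable_exp_neg_abs : Integrable fun x : ℝ => exp (-|x|) := by
  rw [← integrableOn_univ, ← Iic_union_Ioi (a := 0)]
  refine (integrableOn_exp_Iic 0).congr_fun (fun x hx => ?_) measurableSet_Iic |>.union
    ((integrableOn_exp_neg_Ioi 0).congr_fun (fun x hx => ?_) measurableSet_Ioi)
  · rw [abs_of_nonpos hx, neg_neg]
  · rw [abs_of_pos hx]

lemma integral_exp_neg_abs : ∫ x : ℝ, exp (-|x|) = 2 := by
  rw [integral_comp_abs (f := fun x => exp (-x)), integral_exp_neg_Ioi_zero, mul_one]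

section RpowMajorant

variable {a b : ℝ}

lemma rpow_neg_half_mul_min_le_left {τ : ℝ} (hτ : 0 < τ) :
    τ ^ (-(1:ℝ)/2) * min a (b / τ) ≤ a * τ ^ (-(1:ℝ)/2) := by
  rw [mul_comm a]
  exact mul_le_mul_of_nonneg_left (min_le_left _ _) (rpow_nonneg hτ.le _)

lemma rpow_neg_half_mul_min_le_right {τ : ℝ} (hτ : 0 < τ) :
    τ ^ (-(1:ℝ)/2) * min a (b / τ) ≤ b * τ ^ (-(3:ℝ)/2) := by
  have hpow : τ ^ (-(1:ℝ)/2) * (b / τ) = b * τ ^ (-(3:ℝ)/2) := by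
    rw [show -(3:ℝ)/2 = -(1:ℝ)/2 + -1 by norm_num, rpow_add hτ, rpow_neg_one, div_eq_mul_inv]
    ring
  exact hpow ▸ mul_le_mul_of_nonneg_left (min_le_right _ _) (rpow_nonneg hτ.le _)

lemma rpow_neg_half_mul_min_nonneg (ha : 0 ≤ a) (hb : 0 ≤ b) {τ : ℝ} (hτ : 0 < τ) :
    0 ≤ τ ^ (-(1:ℝ)/2) * min a (b / τ) :=
  mul_nonneg (rpow_nonneg hτ.le _) (le_min ha (div_nonneg hb hτ.le))

lemma integrableOn_rpow_neg_half_mul_min (ha : 0 ≤ a) (hb : 0 ≤ b) :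
    IntegrableOn (fun τ : ℝ => τ ^ (-(1:ℝ)/2) * min a (b / τ)) (Ioi 0) := by
  have hmeas : AEStronglyMeasurable (fun τ : ℝ => τ ^ (-(1:ℝ)/2) * min a (b / τ)) :=
    by fun_prop
  have hbound {s : Set ℝ} (hs : MeasurableSet s) (hs₀ : s ⊆ Ioi 0) {g : ℝ → ℝ}
      (hg : IntegrableOn g s volume) (hle : ∀ τ > 0, τ ^ (-(1:ℝ)/2) * min a (b / τ) ≤ g τ) :
      IntegrableOn (fun τ : ℝ => τ ^ (-(1:ℝ)/2) * min a (b / τ)) s :=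
    Integrable.mono' hg hmeas.restrict <| (ae_restrict_iff' hs).2 <| ae_of_all _ fun τ hτ => by
      rw [norm_of_nonneg (rpow_neg_half_mul_min_nonneg ha hb (hs₀ hτ))]
      exact hle τ (hs₀ hτ)
  rw [← Ioc_union_Ioi_eq_Ioi zero_le_one]
  exact (hbound measurableSet_Ioc Ioc_subset_Ioi_self
      ((intervalIntegral.intervalIntegrable_rpow' (by norm_num)).1.const_mul a)
      fun τ hτ => rpow_neg_half_mul_min_le_left hτ).union
    (hbound measurableSet_Ioi (Ioi_subset_Ioi zero_le_one)
      ((integrableOn_Ioi_rpow_of_lt (by norm_num) one_pos).const_mul b)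
      fun τ hτ => rpow_neg_half_mul_min_le_right hτ)

lemma setIntegral_rpow_neg_half_mul_min_le (ha : 0 ≤ a) (hb : 0 ≤ b) :
    ∫ τ in Ioi 0, τ ^ (-(1:ℝ)/2) * min a (b / τ) ≤ 2 * a + 2 * b := by
  have hint := integrableOn_rpow_neg_half_mul_min ha hb
  rw [← Ioc_union_Ioi_eq_Ioi zero_le_one] at hint ⊢
  rw [setIntegral_union (Ioc_disjoint_Ioi le_rfl) measurableSet_Ioi
    (hint.mono_set subset_union_left) (hint.mono_set subset_union_right)]
  have h₁ : ∫ τ in Ioc (0:ℝ) 1, τ ^ (-(1:ℝ)/2) * min a (b / τ) ≤ a * 2 := by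
    calc _ ≤ ∫ τ in Ioc (0:ℝ) 1, a * τ ^ (-(1:ℝ)/2) :=
          setIntegral_mono_on (hint.mono_set subset_union_left)
            ((intervalIntegral.intervalIntegrable_rpow' (by norm_num)).1.const_mul a) measurableSet_Ioc
            fun τ hτ => rpow_neg_half_mul_min_le_left hτ.1
      _ = a * 2 := by
        rw [integral_const_mul, ← intervalIntegral.integral_of_le zero_le_one,
          integral_rpow (by norm_num)]
        norm_num
  have h₂ : ∫ τ in Ioi (1:ℝ), τ ^ (-(1:ℝ)/2) * min a (b / τ) ≤ b * 2 := by
    calc _ ≤ ∫ τ in Ioi (1:ℝ), b * τ ^ (-(3:ℝ)/2) :=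
          setIntegral_mono_on (hint.mono_set subset_union_right)
            ((integrableOn_Ioi_rpow_of_lt (by norm_num) one_pos).const_mul b) measurableSet_Ioi
            fun τ hτ => rpow_neg_half_mul_min_le_right (one_pos.trans hτ)
      _ = b * 2 := by
        rw [integral_const_mul, integral_Ioi_rpow_of_lt (by norm_num) one_pos]
        norm_num
  linarith

end RpowMajorant

noncomputable def testEffectMarginal (θ τ : ℝ) : ℝ :=
  ∫ η, exp (-τ * η ^ 2) * exp (-(|θ + η| + |θ - η|))

lemma exp_neg_abs_add_add_abs_sub_le (θ η : ℝ) :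
    exp (-(|θ + η| + |θ - η|)) ≤ exp (-|θ|) * exp (-|η|) := by
  rw [← exp_add, exp_le_exp]
  linarith [abs_add_abs_le_abs_add_add_abs_sub θ η]

lemma testEffectMarginal_nonneg (θ τ : ℝ) : 0 ≤ testEffectMarginal θ τ :=
  integral_nonneg fun _ => by positivity

section TestEffectMarginal

variable {τ : ℝ}

lemma testEffectMarginal_integrand_le (θ : ℝ) (hτ : 0 ≤ τ) (η : ℝ) :
    exp (-τ * η ^ 2) * exp (-(|θ + η| + |θ - η|)) ≤ exp (-|θ|) * exp (-|η|) := by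
  rw [← one_mul (exp (-|θ|) * _)]
  refine mul_le_mul ?_ (exp_neg_abs_add_add_abs_sub_le θ η) (by positivity) zero_le_one
  exact exp_le_one_iff.2 (by nlinarith [sq_nonneg η])

lemma integrable_testEffectMarginal_integrand (θ : ℝ) (hτ : 0 ≤ τ) :
    Integrable fun η => exp (-τ * η ^ 2) * exp (-(|θ + η| + |θ - η|)) :=
  (integrable_exp_neg_abs.const_mul (exp (-|θ|))).mono' (by fun_prop) <| ae_of_all _ fun η => by
    rw [norm_of_nonneg (by positivity)]
    exact testEffectMarginal_integrand_le θ hτ η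

lemma testEffectMarginal_le_two_mul (θ : ℝ) (hτ : 0 ≤ τ) :
    testEffectMarginal θ τ ≤ 2 * exp (-|θ|) := by
  calc testEffectMarginal θ τ ≤ ∫ η, exp (-|θ|) * exp (-|η|) :=
        integral_mono (integrable_testEffectMarginal_integrand θ hτ)
          (integrable_exp_neg_abs.const_mul _) (testEffectMarginal_integrand_le θ hτ)
    _ = 2 * exp (-|θ|) := by rw [integral_const_mul, integral_exp_neg_abs, mul_comm]

lemma testEffectMarginal_le_sqrt_mul (θ : ℝ) (hτ : 0 < τ) :
    testEffectMarginal θ τ ≤ √(π / τ) * exp (-|θ|) := by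
  calc testEffectMarginal θ τ ≤ ∫ η, exp (-τ * η ^ 2) * exp (-|θ|) := by
        refine integral_mono (integrable_testEffectMarginal_integrand θ hτ.le)
          ((integrable_exp_neg_mul_sq hτ).mul_const _) fun η => ?_
        refine mul_le_mul_of_nonneg_left (exp_le_exp.2 ?_) (exp_pos _).le
        linarith [abs_add_abs_le_abs_add_add_abs_sub θ η, abs_nonneg η]
    _ = √(π / τ) * exp (-|θ|) := by rw [integral_mul_const, integral_gaussian]

lemma testEffectMarginal_mul_le (θ₁ θ₂ : ℝ) (hτ : 0 < τ) :
    testEffectMarginal θ₁ τ * testEffectMarginal θ₂ τ ≤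
      min 4 (π / τ) * exp (-(|θ₁| + |θ₂|)) := by
  have h₁ := testEffectMarginal_nonneg θ₁ τ
  have h₂ := testEffectMarginal_nonneg θ₂ τ
  rw [min_mul_of_nonneg _ _ (exp_pos _).le, neg_add, exp_add]
  refine le_min ?_ ?_
  · calc _ ≤ (2 * exp (-|θ₁|)) * (2 * exp (-|θ₂|)) :=
          mul_le_mul (testEffectMarginal_le_two_mul θ₁ hτ.le)
            (testEffectMarginal_le_two_mul θ₂ hτ.le) h₂ (by positivity)
      _ = _ := by ring
  · calc _ ≤ (√(π / τ) * exp (-|θ₁|)) * (√(π / τ) * exp (-|θ₂|)) :=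
          mul_le_mul (testEffectMarginal_le_sqrt_mul θ₁ hτ)
            (testEffectMarginal_le_sqrt_mul θ₂ hτ) h₂ (by positivity)
      _ = (√(π / τ) * √(π / τ)) * (exp (-|θ₁|) * exp (-|θ₂|)) := by ring
      _ = _ := by rw [mul_self_sqrt (by positivity)]

end TestEffectMarginal

lemma integral_integral_eq_rpow_mul_testEffectMarginal (θ₁ θ₂ τ : ℝ) :
    (∫ η₂ : ℝ, ∫ η₁ : ℝ,
        τ ^ (-(1:ℝ)/2) * exp (-τ * (η₁ ^ 2 + η₂ ^ 2)) *
          exp (-(|θ₁ + η₁| + |θ₁ - η₁| + |θ₂ + η₂| + |θ₂ - η₂|))) =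
      τ ^ (-(1:ℝ)/2) * (testEffectMarginal θ₁ τ * testEffectMarginal θ₂ τ) := by
  have hsplit (η₁ η₂ : ℝ) :
      τ ^ (-(1:ℝ)/2) * exp (-τ * (η₁ ^ 2 + η₂ ^ 2)) *
          exp (-(|θ₁ + η₁| + |θ₁ - η₁| + |θ₂ + η₂| + |θ₂ - η₂|)) =
        (τ ^ (-(1:ℝ)/2) * (exp (-τ * η₂ ^ 2) * exp (-(|θ₂ + η₂| + |θ₂ - η₂|)))) *
          (exp (-τ * η₁ ^ 2) * exp (-(|θ₁ + η₁| + |θ₁ - η₁|))) := by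
    rw [show -τ * (η₁ ^ 2 + η₂ ^ 2) = -τ * η₁ ^ 2 + -τ * η₂ ^ 2 by ring,
      show -(|θ₁ + η₁| + |θ₁ - η₁| + |θ₂ + η₂| + |θ₂ - η₂|) =
        -(|θ₁ + η₁| + |θ₁ - η₁|) + -(|θ₂ + η₂| + |θ₂ - η₂|) by ring, exp_add, exp_add]
    ring
  simp only [hsplit, integral_const_mul, integral_mul_const, testEffectMarginal]
  ring

theorem test_effect_marginalization_bound :
    ∃ K > 0, ∀ θ₁ θ₂ : ℝ,
      (∫ τ in Set.Ioi (0:ℝ), ∫ η₂ : ℝ, ∫ η₁ : ℝ,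
          τ ^ (-(1:ℝ)/2) * Real.exp (-τ * (η₁ ^ 2 + η₂ ^ 2)) *
            Real.exp (-(|θ₁ + η₁| + |θ₁ - η₁| + |θ₂ + η₂| + |θ₂ - η₂|))) ≤
        K * Real.exp (-(|θ₁| + |θ₂|)) := by
  refine ⟨2 * 4 + 2 * π, by positivity, fun θ₁ θ₂ => ?_⟩
  set E := exp (-(|θ₁| + |θ₂|))
  simp_rw [integral_integral_eq_rpow_mul_testEffectMarginal]
  calc ∫ τ in Ioi 0, τ ^ (-(1:ℝ)/2) * (testEffectMarginal θ₁ τ * testEffectMarginal θ₂ τ)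
      ≤ ∫ τ in Ioi 0, E * (τ ^ (-(1:ℝ)/2) * min 4 (π / τ)) := by
        refine integral_mono_of_nonneg ?_
          ((integrableOn_rpow_neg_half_mul_min (by norm_num) pi_pos.le).const_mul E) ?_
        all_goals filter_upwards [ae_restrict_mem measurableSet_Ioi] with τ (hτ : 0 < τ)
        · exact mul_nonneg (rpow_nonneg hτ.le _)
            (mul_nonneg (testEffectMarginal_nonneg θ₁ τ) (testEffectMarginal_nonneg θ₂ τ))
        · calc _ ≤ τ ^ (-(1:ℝ)/2) * (min 4 (π / τ) * E) :=
                mul_le_mul_of_nonneg_left (testEffectMarginal_mul_le θ₁ θ₂ hτ)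
                  (rpow_nonneg hτ.le _)
            _ = _ := by ring
    _ = E * ∫ τ in Ioi 0, τ ^ (-(1:ℝ)/2) * min 4 (π / τ) := integral_const_mul _ _
    _ ≤ E * (2 * 4 + 2 * π) :=
        mul_le_mul_of_nonneg_left (setIntegral_rpow_neg_half_mul_min_le (by norm_num) pi_pos.le)
          (exp_pos _).le
    _ = (2 * 4 + 2 * π) * E := mul_comm _ _
end

section
/- There exists a constant K > 0 such that for all real θ₁, θ₂, the triple integral ∫₀^∞ ∫_{-∞}^{∞} ∫_{-∞}^{∞} δ^{-1/2} e^{-(δ/2)(φ₁²+φ₂²)} e^{-(|θ₁+φ₁|+|θ₂+φ₂|)} dφ₁ dφ₂ dδ ≤ K/(1+|θ₁|). -/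
/-!
For fixed `δ` the inner double integral factorizes as `δ^(-1/2) G(δ, θ₁) G(δ, θ₂)` with
`G(δ, θ) = ∫ exp (-δ φ² / 2) exp (-|θ + φ|) dφ`. Bounding `G` by `2` (drop the Gaussian) and by
`√(2π / δ)` (drop the Laplace factor) gives `G(δ, θ₁) G(δ, θ₂) ≤ (4 + 2π) / (1 + δ)`, and
`δ^(-1/2) / (1 + δ)` is integrable on `(0, ∞)`: this bounds the integral uniformly.
For decay in `θ₁`, split the `φ`-integral at `|φ| = |θ₁| / 2`. Far out the Gaussian factor is at
most `exp (-δ θ₁² / 8)`, whose `δ^(-1/2)`-weighted integral is `√(8π) / |θ₁|`; near the origin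
`|θ₁ + φ| ≥ |θ₁| / 2`, so the Laplace factor gains `exp (-|θ₁| / 4)`. Hence `|θ₁|` times the
integral is bounded as well, and the two bounds combine to `K / (1 + |θ₁|)`.
-/

open MeasureTheory Real Set

theorem setIntegral_mono_on_of_nonneg {α : Type*} [MeasurableSpace α] {μ : Measure α}
    {s : Set α} {f g : α → ℝ} (hs : MeasurableSet s) (hg : IntegrableOn g s μ)
    (hf : ∀ x ∈ s, 0 ≤ f x) (hfg : ∀ x ∈ s, f x ≤ g x) :
    ∫ x in s, f x ∂μ ≤ ∫ x in s, g x ∂μ :=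
  integral_mono_of_nonneg ((ae_restrict_iff' hs).2 (ae_of_all _ hf)) hg
    ((ae_restrict_iff' hs).2 (ae_of_all _ hfg))

theorem integral_exp_neg_mul_abs {c : ℝ} (hc : 0 < c) : ∫ x : ℝ, exp (-(c * |x|)) = 2 / c := by
  rw [integral_comp_abs (f := fun x => exp (-(c * x)))]
  simp_rw [← neg_mul]
  rw [integral_exp_mul_Ioi (neg_neg_iff_pos.2 hc)]
  field_simp
  simp

theorem integrable_exp_neg_mul_abs {c : ℝ} (hc : 0 < c) :
    Integrable fun x : ℝ => exp (-(c * |x|)) :=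
  Integrable.of_integral_ne_zero (by rw [integral_exp_neg_mul_abs hc]; positivity)

theorem mul_exp_neg_div_le {a : ℝ} (ha : 0 < a) (x : ℝ) : x * exp (-(x / a)) ≤ a :=
  calc x * exp (-(x / a)) = a * (x / a * exp (-(x / a))) := by field_simp
    _ ≤ a * 1 := by
      gcongr; exact (mul_exp_neg_le_exp_neg_one _).trans (exp_le_one_iff.2 (by norm_num))
    _ = a := mul_one a

theorem integral_rpow_neg_half_mul_exp_neg_mul {r : ℝ} (hr : 0 < r) :
    ∫ δ in Ioi (0:ℝ), δ ^ (-(1:ℝ)/2) * exp (-(r * δ)) = √(π / r) := by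
  rw [show -(1:ℝ)/2 = 1/2 - 1 by norm_num, integral_rpow_mul_exp_neg_mul_Ioi one_half_pos hr,
    Gamma_one_half_eq, ← sqrt_eq_rpow, ← sqrt_mul (by positivity), one_div_mul_eq_div]

theorem integrableOn_rpow_neg_half_mul_exp_neg_mul {r : ℝ} (hr : 0 < r) :
    IntegrableOn (fun δ : ℝ => δ ^ (-(1:ℝ)/2) * exp (-(r * δ))) (Ioi 0) :=
  Integrable.of_integral_ne_zero (by
    rw [integral_rpow_neg_half_mul_exp_neg_mul hr]; positivity)

theorem integrableOn_rpow_neg_half_div_one_add :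
    IntegrableOn (fun δ : ℝ => δ ^ (-(1:ℝ)/2) / (1 + δ)) (Ioi 0) := by
  -- substituting `δ = x²` turns the integrand into `(1 + x²)⁻¹`
  rw [← integrableOn_Ioi_comp_rpow_iff' _ two_ne_zero]
  refine integrable_inv_one_add_sq.integrableOn.congr_fun (fun x (hx : 0 < x) => ?_)
    measurableSet_Ioi
  rw [smul_eq_mul, ← rpow_mul hx.le, rpow_two]
  norm_num [rpow_neg_one]
  field_simp

noncomputable def gaussLaplace (c δ θ : ℝ) : ℝ := ∫ φ, exp (-(δ / 2) * φ ^ 2) * exp (-(c * |θ + φ|))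

section gaussLaplace

variable {c δ : ℝ}

theorem exp_neg_half_mul_sq_le_one (hδ : 0 ≤ δ) (φ : ℝ) : exp (-(δ / 2) * φ ^ 2) ≤ 1 :=
  exp_le_one_iff.2 (by nlinarith [sq_nonneg φ])

theorem integrable_exp_neg_mul_abs_add (hc : 0 < c) (θ : ℝ) :
    Integrable fun φ : ℝ => exp (-(c * |θ + φ|)) :=
  (integrable_exp_neg_mul_abs hc).comp_add_left θ

theorem integral_exp_neg_mul_abs_add (hc : 0 < c) (θ : ℝ) :
    ∫ φ : ℝ, exp (-(c * |θ + φ|)) = 2 / c := by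
  rw [integral_add_left_eq_self (fun x => exp (-(c * |x|))), integral_exp_neg_mul_abs hc]

theorem integrable_gaussLaplace_integrand (hc : 0 < c) (hδ : 0 ≤ δ) (θ : ℝ) :
    Integrable fun φ : ℝ => exp (-(δ / 2) * φ ^ 2) * exp (-(c * |θ + φ|)) :=
  (integrable_exp_neg_mul_abs_add hc θ).bdd_mul (c := 1) (by fun_prop) (ae_of_all _ fun φ => by
    rw [norm_of_nonneg (exp_nonneg _)]; exact exp_neg_half_mul_sq_le_one hδ φ)

theorem gaussLaplace_nonneg (c δ θ : ℝ) : 0 ≤ gaussLaplace c δ θ :=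
  integral_nonneg fun _ => by positivity

theorem gaussLaplace_le_two_div (hc : 0 < c) (hδ : 0 ≤ δ) (θ : ℝ) :
    gaussLaplace c δ θ ≤ 2 / c := by
  rw [← integral_exp_neg_mul_abs_add hc θ]
  refine integral_mono_of_nonneg (ae_of_all _ fun _ => by positivity)
    (integrable_exp_neg_mul_abs_add hc θ) (ae_of_all _ fun φ => ?_)
  exact mul_le_of_le_one_left (exp_nonneg _) (exp_neg_half_mul_sq_le_one hδ φ)

theorem gaussLaplace_le_sqrt (hc : 0 ≤ c) (hδ : 0 < δ) (θ : ℝ) :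
    gaussLaplace c δ θ ≤ √(π / (δ / 2)) := by
  rw [← integral_gaussian]
  refine integral_mono_of_nonneg (ae_of_all _ fun _ => by positivity)
    (integrable_exp_neg_mul_sq (half_pos hδ)) (ae_of_all _ fun φ => ?_)
  exact mul_le_of_le_one_right (exp_nonneg _) (exp_le_one_iff.2 (neg_nonpos.2 (by positivity)))

theorem gaussLaplace_sq_le (hc : 0 < c) (hδ : 0 < δ) (θ : ℝ) :
    gaussLaplace c δ θ ^ 2 ≤ (4 / c ^ 2 + 2 * π) / (1 + δ) := by
  have hG := gaussLaplace_nonneg c δ θ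
  have hlaplace : gaussLaplace c δ θ ^ 2 ≤ 4 / c ^ 2 := by
    calc gaussLaplace c δ θ ^ 2 ≤ (2 / c) ^ 2 :=
          pow_le_pow_left₀ hG (gaussLaplace_le_two_div hc hδ.le θ) 2
      _ = 4 / c ^ 2 := by ring
  have hgauss : δ * gaussLaplace c δ θ ^ 2 ≤ 2 * π := by
    calc δ * gaussLaplace c δ θ ^ 2 ≤ δ * √(π / (δ / 2)) ^ 2 := by
          gcongr; exact gaussLaplace_le_sqrt hc.le hδ θ
      _ = 2 * π := by rw [sq_sqrt (by positivity)]; field_simp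
  rw [le_div_iff₀ (by positivity)]
  linarith

theorem gaussLaplace_mul_le {c' : ℝ} (hc : 0 < c) (hc' : 0 < c') (hδ : 0 < δ) (θ θ' : ℝ) :
    gaussLaplace c δ θ * gaussLaplace c' δ θ' ≤ (2 / c ^ 2 + 2 / c' ^ 2 + 2 * π) / (1 + δ) := by
  have h := gaussLaplace_sq_le hc hδ θ
  have h' := gaussLaplace_sq_le hc' hδ θ'
  have hamgm := two_mul_le_add_sq (gaussLaplace c δ θ) (gaussLaplace c' δ θ')
  have : (2 / c ^ 2 + 2 / c' ^ 2 + 2 * π) / (1 + δ) =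
      ((4 / c ^ 2 + 2 * π) / (1 + δ) + (4 / c' ^ 2 + 2 * π) / (1 + δ)) / 2 := by ring
  linarith

theorem gaussLaplace_integrand_le (hc : 0 ≤ c) (hδ : 0 ≤ δ) (θ φ : ℝ) :
    exp (-(δ / 2) * φ ^ 2) * exp (-(c * |θ + φ|)) ≤
      exp (-(δ * θ ^ 2 / 8)) * exp (-(c * |θ + φ|)) +
        exp (-(c * |θ| / 4)) * (exp (-(δ / 2) * φ ^ 2) * exp (-(c / 2 * |θ + φ|))) := by
  rcases le_or_gt |θ| (2 * |φ|) with hfar | hnear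
  · have hsq : θ ^ 2 ≤ 4 * φ ^ 2 := by
      have := sq_le_sq.2 (hfar.trans_eq (by rw [abs_mul, abs_two]) : |θ| ≤ |2 * φ|)
      linarith
    refine le_add_of_le_of_nonneg (mul_le_mul_of_nonneg_right ?_ (exp_nonneg _)) (by positivity)
    exact exp_le_exp.2 (by nlinarith)
  · have hθφ : |θ| / 2 ≤ |θ + φ| := by
      have := abs_add_le (θ + φ) (-φ)
      rw [add_neg_cancel_right, abs_neg] at this
      linarith
    refine le_add_of_nonneg_of_le (by positivity) ?_
    simp only [← exp_add]
    exact exp_le_exp.2 (by nlinarith)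

theorem gaussLaplace_le_exp_add (hc : 0 < c) (hδ : 0 ≤ δ) (θ : ℝ) :
    gaussLaplace c δ θ ≤
      2 / c * exp (-(δ * θ ^ 2 / 8)) + exp (-(c * |θ| / 4)) * gaussLaplace (c / 2) δ θ := by
  have hfar := (integrable_exp_neg_mul_abs_add hc θ).const_mul (exp (-(δ * θ ^ 2 / 8)))
  have hnear := (integrable_gaussLaplace_integrand (half_pos hc) hδ θ).const_mul
    (exp (-(c * |θ| / 4)))
  calc gaussLaplace c δ θ ≤ ∫ φ, (exp (-(δ * θ ^ 2 / 8)) * exp (-(c * |θ + φ|)) +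
        exp (-(c * |θ| / 4)) * (exp (-(δ / 2) * φ ^ 2) * exp (-(c / 2 * |θ + φ|)))) :=
        integral_mono (integrable_gaussLaplace_integrand hc hδ θ) (hfar.add hnear)
          (gaussLaplace_integrand_le hc.le hδ θ)
    _ = _ := by
      rw [integral_add hfar hnear, integral_const_mul, integral_const_mul,
        integral_exp_neg_mul_abs_add hc, mul_comm, gaussLaplace]

theorem gaussLaplace_one_mul_le_exp_add (hδ : 0 < δ) (θ₁ θ₂ : ℝ) :
    gaussLaplace 1 δ θ₁ * gaussLaplace 1 δ θ₂ ≤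
      4 * exp (-(θ₁ ^ 2 / 8 * δ)) + exp (-(|θ₁| / 4)) * ((10 + 2 * π) / (1 + δ)) := by
  have hG₁ := gaussLaplace_le_exp_add one_pos hδ.le θ₁
  have hG₂ := gaussLaplace_le_two_div one_pos hδ.le θ₂
  have hmul := gaussLaplace_mul_le (half_pos one_pos) one_pos hδ θ₁ θ₂
  have := gaussLaplace_nonneg 1 δ θ₂
  calc gaussLaplace 1 δ θ₁ * gaussLaplace 1 δ θ₂
      ≤ (2 / 1 * exp (-(δ * θ₁ ^ 2 / 8)) + exp (-(1 * |θ₁| / 4)) *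
          gaussLaplace (1 / 2) δ θ₁) * gaussLaplace 1 δ θ₂ := by gcongr
    _ = 2 * exp (-(δ * θ₁ ^ 2 / 8)) * gaussLaplace 1 δ θ₂ + exp (-(1 * |θ₁| / 4)) *
          (gaussLaplace (1 / 2) δ θ₁ * gaussLaplace 1 δ θ₂) := by ring
    _ ≤ 2 * exp (-(δ * θ₁ ^ 2 / 8)) * (2 / 1) + exp (-(1 * |θ₁| / 4)) *
          ((2 / (1 / 2) ^ 2 + 2 / 1 ^ 2 + 2 * π) / (1 + δ)) := by gcongr
    _ = _ := by ring_nf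

end gaussLaplace

theorem integral_integral_eq_gaussLaplace_mul (δ θ₁ θ₂ : ℝ) :
    ∫ φ₂ : ℝ, ∫ φ₁ : ℝ, δ ^ (-(1:ℝ)/2) * exp (-(δ / 2) * (φ₁ ^ 2 + φ₂ ^ 2)) *
        exp (-(|θ₁ + φ₁| + |θ₂ + φ₂|)) =
      δ ^ (-(1:ℝ)/2) * (gaussLaplace 1 δ θ₁ * gaussLaplace 1 δ θ₂) := by
  have hsplit : ∀ φ₁ φ₂ : ℝ, δ ^ (-(1:ℝ)/2) * exp (-(δ / 2) * (φ₁ ^ 2 + φ₂ ^ 2)) *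
      exp (-(|θ₁ + φ₁| + |θ₂ + φ₂|)) =
        (δ ^ (-(1:ℝ)/2) * (exp (-(δ / 2) * φ₂ ^ 2) * exp (-(1 * |θ₂ + φ₂|)))) *
          (exp (-(δ / 2) * φ₁ ^ 2) * exp (-(1 * |θ₁ + φ₁|))) := by
    intro φ₁ φ₂
    simp only [mul_assoc, ← exp_add]
    ring_nf
  simp_rw [hsplit, integral_const_mul, integral_mul_const, integral_const_mul]
  rw [gaussLaplace, gaussLaplace]
  ring

theorem rpow_neg_half_mul_gaussLaplace_mul_nonneg {δ : ℝ} (hδ : 0 < δ) (θ₁ θ₂ : ℝ) :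
    0 ≤ δ ^ (-(1:ℝ)/2) * (gaussLaplace 1 δ θ₁ * gaussLaplace 1 δ θ₂) :=
  mul_nonneg (rpow_nonneg hδ.le _)
    (mul_nonneg (gaussLaplace_nonneg 1 δ θ₁) (gaussLaplace_nonneg 1 δ θ₂))

theorem setIntegral_gaussLaplace_mul_le (θ₁ θ₂ : ℝ) :
    ∫ δ in Ioi (0:ℝ), δ ^ (-(1:ℝ)/2) * (gaussLaplace 1 δ θ₁ * gaussLaplace 1 δ θ₂) ≤
      (4 + 2 * π) * ∫ δ in Ioi (0:ℝ), δ ^ (-(1:ℝ)/2) / (1 + δ) := by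
  rw [← integral_const_mul]
  refine setIntegral_mono_on_of_nonneg measurableSet_Ioi
    (integrableOn_rpow_neg_half_div_one_add.const_mul _)
    (fun δ hδ => rpow_neg_half_mul_gaussLaplace_mul_nonneg hδ θ₁ θ₂) (fun δ (hδ : 0 < δ) => ?_)
  calc δ ^ (-(1:ℝ)/2) * (gaussLaplace 1 δ θ₁ * gaussLaplace 1 δ θ₂)
      ≤ δ ^ (-(1:ℝ)/2) * ((2 / 1 ^ 2 + 2 / 1 ^ 2 + 2 * π) / (1 + δ)) := by
        gcongr; exact gaussLaplace_mul_le one_pos one_pos hδ θ₁ θ₂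
    _ = (4 + 2 * π) * (δ ^ (-(1:ℝ)/2) / (1 + δ)) := by ring

theorem abs_mul_setIntegral_gaussLaplace_mul_le (θ₁ θ₂ : ℝ) :
    |θ₁| * ∫ δ in Ioi (0:ℝ), δ ^ (-(1:ℝ)/2) * (gaussLaplace 1 δ θ₁ * gaussLaplace 1 δ θ₂) ≤
      4 * √(8 * π) + 4 * ((10 + 2 * π) * ∫ δ in Ioi (0:ℝ), δ ^ (-(1:ℝ)/2) / (1 + δ)) := by
  set I := ∫ δ in Ioi (0:ℝ), δ ^ (-(1:ℝ)/2) / (1 + δ)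
  have hI : 0 ≤ I := setIntegral_nonneg measurableSet_Ioi fun δ (hδ : 0 < δ) => by positivity
  rcases eq_or_ne θ₁ 0 with rfl | hθ
  · simp only [abs_zero, zero_mul]; positivity
  set r := θ₁ ^ 2 / 8 with hr_def
  have hr : 0 < r := by positivity
  have hgauss := (integrableOn_rpow_neg_half_mul_exp_neg_mul hr).const_mul 4
  have hmajor := integrableOn_rpow_neg_half_div_one_add.const_mul
    (exp (-(|θ₁| / 4)) * (10 + 2 * π))
  have hbound : ∫ δ in Ioi (0:ℝ), δ ^ (-(1:ℝ)/2) * (gaussLaplace 1 δ θ₁ * gaussLaplace 1 δ θ₂) ≤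
      ∫ δ in Ioi (0:ℝ), (4 * (δ ^ (-(1:ℝ)/2) * exp (-(r * δ))) +
        exp (-(|θ₁| / 4)) * (10 + 2 * π) * (δ ^ (-(1:ℝ)/2) / (1 + δ))) := by
    refine setIntegral_mono_on_of_nonneg measurableSet_Ioi (hgauss.add hmajor)
      (fun δ hδ => rpow_neg_half_mul_gaussLaplace_mul_nonneg hδ θ₁ θ₂)
      (fun δ (hδ : 0 < δ) => ?_)
    calc δ ^ (-(1:ℝ)/2) * (gaussLaplace 1 δ θ₁ * gaussLaplace 1 δ θ₂)
        ≤ δ ^ (-(1:ℝ)/2) * (4 * exp (-(r * δ)) +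
            exp (-(|θ₁| / 4)) * ((10 + 2 * π) / (1 + δ))) := by
          gcongr; exact gaussLaplace_one_mul_le_exp_add hδ θ₁ θ₂
      _ = _ := by ring
  rw [integral_add hgauss hmajor, integral_const_mul, integral_const_mul,
    integral_rpow_neg_half_mul_exp_neg_mul hr] at hbound
  have hsqrt : |θ₁| * √(π / r) = √(8 * π) := by
    rw [hr_def, show π / (θ₁ ^ 2 / 8) = 8 * π / θ₁ ^ 2 by field_simp,
      sqrt_div (by positivity), sqrt_sq_eq_abs, mul_div_cancel₀ _ (abs_ne_zero.2 hθ)]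
  calc |θ₁| * ∫ δ in Ioi (0:ℝ), δ ^ (-(1:ℝ)/2) * (gaussLaplace 1 δ θ₁ * gaussLaplace 1 δ θ₂)
      ≤ |θ₁| * (4 * √(π / r) + exp (-(|θ₁| / 4)) * (10 + 2 * π) * I) := by gcongr
    _ = 4 * (|θ₁| * √(π / r)) + |θ₁| * exp (-(|θ₁| / 4)) * ((10 + 2 * π) * I) := by ring
    _ ≤ 4 * √(8 * π) + 4 * ((10 + 2 * π) * I) := by
      rw [hsqrt]; gcongr; exact mul_exp_neg_div_le four_pos |θ₁|

theorem daily_effect_marginalization_bound :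
    ∃ K > 0, ∀ θ₁ θ₂ : ℝ,
      (∫ δ in Set.Ioi (0:ℝ), ∫ φ₂ : ℝ, ∫ φ₁ : ℝ,
          δ ^ (-(1:ℝ)/2) * Real.exp (-(δ / 2) * (φ₁ ^ 2 + φ₂ ^ 2)) *
            Real.exp (-(|θ₁ + φ₁| + |θ₂ + φ₂|))) ≤
        K / (1 + |θ₁|) := by
  set I := ∫ δ in Ioi (0:ℝ), δ ^ (-(1:ℝ)/2) / (1 + δ)
  have hI : 0 ≤ I := setIntegral_nonneg measurableSet_Ioi fun δ (hδ : 0 < δ) => by positivity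
  refine ⟨(4 + 2 * π) * I + (4 * √(8 * π) + 4 * ((10 + 2 * π) * I)), by positivity,
    fun θ₁ θ₂ => ?_⟩
  simp_rw [integral_integral_eq_gaussLaplace_mul]
  rw [le_div_iff₀ (by positivity), mul_comm, one_add_mul]
  exact add_le_add (setIntegral_gaussLaplace_mul_le θ₁ θ₂)
    (abs_mul_setIntegral_gaussLaplace_mul_le θ₁ θ₂)
end

section
/- For any real B > 0 and A ∈ ℝ, the integral ∫_{-∞}^{∞} (1/(1+|√B · z + A|)) e^{-z²/2} dz is finite, and more strongly, for fixed positive weights Δ₁,…,Δ_T (T ≥ 2), positive truncated lapses Δ₁⁺,…,Δ_T⁺, ρ > 0, μ ∈ ℝ, V > 0 and φ > 0, setting A(c) = μ·∏_{t=1}^T(1-cρΔ_t⁺) + Σ_{t=1}^T cΔ_t⁺ ∏_{i=t+1}^T(1-cρΔ_i⁺) and B(c) = Σ_{t=1}^T Δ_t ∏_{i=t+1}^T(1-cρΔ_i⁺)² + φV ∏_{t=1}^T(1-cρΔ_t⁺)², the double integral ∫₀^∞ ∫_{-∞}^{∞} (1/(1+|√(B(c)/φ)·z + A(c)|)) e^{-z²/2}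 dz dc is finite. -/
/-!
For fixed `c` the inner integrand is dominated by the Gaussian. For the outer integral,
`(1 + x)⁻¹ ≤ x ^ (-3/4)` and the local integrability of `|u| ^ (-3/4)` give
`∫ (1 + |s z + A|)⁻¹ e^{-z²/2} dz ≤ M s ^ (-3/4)` uniformly in `A`. Since
`B(c) ≥ φ V ∏ (1 - c ρ Δ⁺_t)²` grows like `c ^ (2T)` with `T ≥ 2`, the scale `s(c) = √(B(c)/φ)` is
at least `K c²` for large `c`, so the inner integral is `O(c ^ (-3/2))` at infinity and bounded
by the Gaussian integral near `0`.
-/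

open MeasureTheory Filter Finset Real

lemma integrable_exp_neg_sq_div_two : Integrable fun z : ℝ => exp (-z ^ 2 / 2) :=
  (integrable_exp_neg_mul_sq (b := 1 / 2) (by norm_num)).congr
    (ae_of_all _ fun z => by ring_nf)

lemma inv_one_add_abs_mul_le (x : ℝ) {y : ℝ} (hy : 0 ≤ y) : (1 + |x|)⁻¹ * y ≤ y :=
  mul_le_of_le_one_left hy (inv_le_one_of_one_le₀ (le_add_of_nonneg_right (abs_nonneg x)))

lemma integrable_inv_one_add_abs_mul_exp (a b : ℝ) :
    Integrable fun z : ℝ => (1 + |a * z + b|)⁻¹ * exp (-z ^ 2 / 2) :=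
  integrable_exp_neg_sq_div_two.mono' (by fun_prop) <| ae_of_all _ fun z => by
    rw [norm_of_nonneg (by positivity)]
    exact inv_one_add_abs_mul_le _ (exp_nonneg _)

lemma integral_inv_one_add_abs_mul_exp_le (a b : ℝ) :
    ∫ z, (1 + |a * z + b|)⁻¹ * exp (-z ^ 2 / 2) ≤ ∫ z : ℝ, exp (-z ^ 2 / 2) :=
  integral_mono (integrable_inv_one_add_abs_mul_exp a b) integrable_exp_neg_sq_div_two
    fun _ => inv_one_add_abs_mul_le _ (exp_nonneg _)

lemma inv_one_add_le_rpow_neg {x p : ℝ} (hx : 0 < x) (hp₀ : 0 ≤ p) (hp₁ : p ≤ 1) :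
    (1 + x)⁻¹ ≤ x ^ (-p) := by
  rw [rpow_neg hx.le]
  refine inv_anti₀ (rpow_pos_of_pos hx p) ?_
  rcases le_total x 1 with h | h
  · linarith [rpow_le_one hx.le h hp₀]
  · linarith [rpow_le_self_of_one_le h hp₁]

lemma integrableOn_abs_rpow_neg_Icc {p : ℝ} (hp : p < 1) :
    IntegrableOn (fun u : ℝ => |u| ^ (-p)) (Set.Icc (-1) 1) := by
  refine (locallyIntegrable_of_norm_le_rpow (μ := volume) (C := 1) (α := p) (by simp)
    (by simpa using hp) (ae_of_all _ fun u => ?_)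
    (continuous_abs.measurable.pow_const _).aestronglyMeasurable).integrableOn_isCompact
    isCompact_Icc
  rw [one_mul, norm_of_nonneg (by positivity), norm_eq_abs]

lemma abs_sub_rpow_neg_mul_exp_le {p : ℝ} (hp : 0 ≤ p) (z₀ z : ℝ) :
    |z - z₀| ^ (-p) * exp (-z ^ 2 / 2) ≤
      (Set.Icc (-1) 1).indicator (fun u => |u| ^ (-p)) (z - z₀) + exp (-z ^ 2 / 2) := by
  by_cases h : |z - z₀| ≤ 1
  · rw [Set.indicator_of_mem (show z - z₀ ∈ Set.Icc (-1 : ℝ) 1 from abs_le.1 h)]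
    have : exp (-z ^ 2 / 2) ≤ 1 := exp_le_one_iff.2 (by nlinarith [sq_nonneg z])
    nlinarith [rpow_nonneg (abs_nonneg (z - z₀)) (-p), exp_nonneg (-z ^ 2 / 2)]
  · rw [Set.indicator_of_notMem (show z - z₀ ∉ Set.Icc (-1 : ℝ) 1 from mt abs_le.2 h), zero_add]
    exact mul_le_of_le_one_left (exp_nonneg _)
      (rpow_le_one_of_one_le_of_nonpos (not_le.1 h).le (by linarith))

lemma exists_integral_inv_one_add_abs_mul_exp_le {p : ℝ} (hp₀ : 0 ≤ p) (hp₁ : p < 1) :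
    ∃ M ≥ 0, ∀ s A : ℝ, 0 < s →
      ∫ z, (1 + |s * z + A|)⁻¹ * exp (-z ^ 2 / 2) ≤ s ^ (-p) * M := by
  set g := (Set.Icc (-1 : ℝ) 1).indicator fun u => |u| ^ (-p)
  have hg : Integrable g :=
    (integrableOn_abs_rpow_neg_Icc hp₁).integrable_indicator measurableSet_Icc
  refine ⟨(∫ u, g u) + ∫ z, exp (-z ^ 2 / 2), add_nonneg (integral_nonneg fun u => ?_)
    (integral_nonneg fun z => exp_nonneg _), fun s A hs => ?_⟩
  · exact Set.indicator_nonneg (fun u _ => rpow_nonneg (abs_nonneg u) _) u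
  set z₀ := -A / s
  have hdom : Integrable fun z => g (z - z₀) + exp (-z ^ 2 / 2) :=
    (hg.comp_sub_right z₀).add integrable_exp_neg_sq_div_two
  calc ∫ z, (1 + |s * z + A|)⁻¹ * exp (-z ^ 2 / 2)
      ≤ ∫ z, s ^ (-p) * (g (z - z₀) + exp (-z ^ 2 / 2)) := by
        refine integral_mono_ae (integrable_inv_one_add_abs_mul_exp s A) (hdom.const_mul _) ?_
        filter_upwards [volume.ae_ne z₀] with z hz
        have hsz : |s * z + A| = s * |z - z₀| := by
          rw [← abs_of_pos hs, ← abs_mul, abs_of_pos hs, mul_sub, mul_div_cancel₀ _ hs.ne']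
          ring_nf
        calc (1 + |s * z + A|)⁻¹ * exp (-z ^ 2 / 2)
            ≤ (s * |z - z₀|) ^ (-p) * exp (-z ^ 2 / 2) := by
              rw [hsz]
              gcongr
              exact inv_one_add_le_rpow_neg (by positivity [sub_ne_zero.2 hz]) hp₀ hp₁.le
          _ = s ^ (-p) * (|z - z₀| ^ (-p) * exp (-z ^ 2 / 2)) := by
              rw [mul_rpow hs.le (abs_nonneg _), mul_assoc]
          _ ≤ s ^ (-p) * (g (z - z₀) + exp (-z ^ 2 / 2)) := by
              gcongr
              exact abs_sub_rpow_neg_mul_exp_le hp₀ z₀ z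
    _ = s ^ (-p) * ((∫ u, g u) + ∫ z, exp (-z ^ 2 / 2)) := by
        rw [integral_const_mul, integral_add (hg.comp_sub_right z₀) integrable_exp_neg_sq_div_two,
          integral_sub_right_eq_self]

lemma eventually_pow_card_mul_prod_le_prod_abs_one_sub {ι : Type*} (S : Finset ι) {a : ι → ℝ}
    (ha : ∀ i ∈ S, 0 < a i) :
    ∀ᶠ c in atTop, c ^ #S * ∏ i ∈ S, a i / 2 ≤ ∏ i ∈ S, |1 - c * a i| := by
  have hlarge : ∀ᶠ c in atTop, ∀ i ∈ S, 2 ≤ c * a i := (eventually_all_finset S).2 fun i hi =>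
    (tendsto_id.atTop_mul_const (ha i hi)).eventually_ge_atTop 2
  filter_upwards [hlarge] with c hc
  rw [pow_card_mul_prod]
  refine prod_le_prod (fun i hi => by linarith [hc i hi]) fun i hi => ?_
  rw [abs_sub_comm, le_abs]
  left
  linarith [hc i hi]

lemma exists_eventually_mul_sq_le_sqrt_mul_prod_sq {ι : Type*} {S : Finset ι} (hS : 2 ≤ #S)
    {a : ι → ℝ} (ha : ∀ i ∈ S, 0 < a i) {V : ℝ} (hV : 0 < V) :
    ∃ K > 0, ∀ᶠ c in atTop, K * c ^ 2 ≤ √(V * ∏ i ∈ S, (1 - c * a i) ^ 2) := by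
  have hQ : 0 < ∏ i ∈ S, a i / 2 := prod_pos fun i hi => half_pos (ha i hi)
  refine ⟨√V * ∏ i ∈ S, a i / 2, by positivity, ?_⟩
  filter_upwards [eventually_pow_card_mul_prod_le_prod_abs_one_sub S ha, eventually_ge_atTop 1]
    with c hc hc₁
  rw [prod_pow, sqrt_mul hV.le, sqrt_sq_eq_abs, abs_prod]
  calc √V * (∏ i ∈ S, a i / 2) * c ^ 2 = √V * (c ^ 2 * ∏ i ∈ S, a i / 2) := by ring
    _ ≤ √V * (c ^ #S * ∏ i ∈ S, a i / 2) := by gcongr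
    _ ≤ √V * ∏ i ∈ S, |1 - c * a i| := by gcongr

section

variable {s A : ℝ → ℝ}

lemma integrableOn_Ioi_integral_inv_one_add_abs_mul_exp (hs : Measurable s) (hA : Measurable A)
    {K : ℝ} (hK : 0 < K) (hgrowth : ∀ᶠ c in atTop, K * c ^ 2 ≤ s c) :
    IntegrableOn (fun c => ∫ z, (1 + |s c * z + A c|)⁻¹ * exp (-z ^ 2 / 2)) (Set.Ioi 0) := by
  have hmeas : AEStronglyMeasurable fun c => ∫ z, (1 + |s c * z + A c|)⁻¹ * exp (-z ^ 2 / 2) :=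
    (by fun_prop : Measurable fun p : ℝ × ℝ => (1 + |s p.1 * p.2 + A p.1|)⁻¹ * exp (-p.2 ^ 2 / 2))
      |>.stronglyMeasurable.integral_prod_right' (ν := volume) |>.aestronglyMeasurable
  have hnonneg (c : ℝ) : 0 ≤ ∫ z, (1 + |s c * z + A c|)⁻¹ * exp (-z ^ 2 / 2) :=
    integral_nonneg fun z => by positivity
  obtain ⟨M, hM₀, hM⟩ :=
    exists_integral_inv_one_add_abs_mul_exp_le (p := 3 / 4) (by norm_num) (by norm_num)
  obtain ⟨c₀, hc₀⟩ := eventually_atTop.1 (hgrowth.and (eventually_ge_atTop 1))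
  refine IntegrableOn.mono_set ?_ (Set.Ioi_subset_Ioc_union_Ioi (b := c₀))
  refine IntegrableOn.union ?_ ?_
  · refine Integrable.mono' (integrableOn_const (C := ∫ z : ℝ, exp (-z ^ 2 / 2))
      measure_Ioc_lt_top.ne) hmeas.restrict (ae_of_all _ fun c => ?_)
    rw [norm_of_nonneg (hnonneg c)]
    exact integral_inv_one_add_abs_mul_exp_le _ _
  · refine Integrable.mono' (((integrableOn_Ioi_rpow_of_lt (a := -(3 / 2)) (by norm_num)
      (zero_lt_one.trans_le (hc₀ c₀ le_rfl).2)).const_mul (K ^ (-(3 / 4) : ℝ) * M)))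
      hmeas.restrict ?_
    filter_upwards [ae_restrict_mem measurableSet_Ioi] with c hc
    obtain ⟨hsc, hc₁⟩ := hc₀ c (le_of_lt hc)
    have hpos : 0 < K * c ^ 2 := by positivity
    rw [norm_of_nonneg (hnonneg c)]
    calc ∫ z, (1 + |s c * z + A c|)⁻¹ * exp (-z ^ 2 / 2)
        ≤ s c ^ (-(3 / 4) : ℝ) * M := hM _ _ (hpos.trans_le hsc)
      _ ≤ (K * c ^ 2) ^ (-(3 / 4) : ℝ) * M :=
        mul_le_mul_of_nonneg_right (rpow_le_rpow_of_nonpos hpos hsc (by norm_num)) hM₀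
      _ = K ^ (-(3 / 4) : ℝ) * M * c ^ (-(3 / 2) : ℝ) := by
        rw [mul_rpow hK.le (by positivity), ← rpow_natCast, ← rpow_mul (by positivity)]
        norm_num
        ring

theorem integrableOn_Ioi_prod_inv_one_add_abs_mul_exp (hs : Measurable s) (hA : Measurable A)
    {K : ℝ} (hK : 0 < K) (hgrowth : ∀ᶠ c in atTop, K * c ^ 2 ≤ s c) :
    IntegrableOn (fun p : ℝ × ℝ => (1 + |s p.1 * p.2 + A p.1|)⁻¹ * exp (-p.2 ^ 2 / 2))
      (Set.Ioi 0 ×ˢ Set.univ) := by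
  rw [IntegrableOn, Measure.volume_eq_prod, ← Measure.prod_restrict, Measure.restrict_univ,
    integrable_prod_iff (by fun_prop)]
  refine ⟨ae_of_all _ fun c => integrable_inv_one_add_abs_mul_exp (s c) (A c), ?_⟩
  have hnorm (c z : ℝ) : ‖(1 + |s c * z + A c|)⁻¹ * exp (-z ^ 2 / 2)‖ =
      (1 + |s c * z + A c|)⁻¹ * exp (-z ^ 2 / 2) := norm_of_nonneg (by positivity)
  simp only [hnorm]
  exact integrableOn_Ioi_integral_inv_one_add_abs_mul_exp hs hA hK hgrowth

end

theorem lemma5_finiteness (T : ℕ) (hT : 2 ≤ T) (Δ Δp : ℕ → ℝ)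
    (hΔ : ∀ t ∈ Finset.Icc 1 T, 0 < Δ t) (hΔp : ∀ t ∈ Finset.Icc 1 T, 0 < Δp t)
    (ρ μ V φ : ℝ) (hρ : 0 < ρ) (hV : 0 < V) (hφ : 0 < φ) :
    (∀ B A : ℝ, 0 < B →
      Integrable (fun z : ℝ => (1 + |Real.sqrt B * z + A|)⁻¹ * Real.exp (-z ^ 2 / 2))) ∧
    IntegrableOn
      (fun p : ℝ × ℝ =>
        (1 + |Real.sqrt
            (((∑ t ∈ Finset.Icc 1 T, Δ t * ∏ i ∈ Finset.Icc (t + 1) T, (1 - p.1 * ρ * Δp i) ^ 2)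
              + φ * V * ∏ t ∈ Finset.Icc 1 T, (1 - p.1 * ρ * Δp t) ^ 2) / φ) * p.2 +
          (μ * ∏ t ∈ Finset.Icc 1 T, (1 - p.1 * ρ * Δp t)
            + ∑ t ∈ Finset.Icc 1 T, p.1 * Δp t *
                ∏ i ∈ Finset.Icc (t + 1) T, (1 - p.1 * ρ * Δp i))|)⁻¹ *
          Real.exp (-p.2 ^ 2 / 2))
      (Set.Ioi (0:ℝ) ×ˢ Set.univ) := by
  refine ⟨fun B A _ => integrable_inv_one_add_abs_mul_exp _ _, ?_⟩
  obtain ⟨K, hK, hgrowth⟩ := exists_eventually_mul_sq_le_sqrt_mul_prod_sq (by simpa using hT)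
    (fun t ht => mul_pos hρ (hΔp t ht)) hV
  simp only [← mul_assoc] at hgrowth
  refine integrableOn_Ioi_prod_inv_one_add_abs_mul_exp (K := K)
    (s := fun c => √(((∑ t ∈ Icc 1 T, Δ t * ∏ i ∈ Icc (t + 1) T, (1 - c * ρ * Δp i) ^ 2)
      + φ * V * ∏ t ∈ Icc 1 T, (1 - c * ρ * Δp t) ^ 2) / φ))
    (A := fun c => μ * ∏ t ∈ Icc 1 T, (1 - c * ρ * Δp t)
      + ∑ t ∈ Icc 1 T, c * Δp t * ∏ i ∈ Icc (t + 1) T, (1 - c * ρ * Δp i))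
    (by fun_prop) (by fun_prop) hK (hgrowth.mono fun c hc => hc.trans (sqrt_le_sqrt ?_))
  have hsum : 0 ≤ ∑ t ∈ Icc 1 T, Δ t * ∏ i ∈ Icc (t + 1) T, (1 - c * ρ * Δp i) ^ 2 :=
    sum_nonneg fun t ht => mul_nonneg (hΔ t ht).le (prod_nonneg fun i _ => sq_nonneg _)
  rw [le_div_iff₀ hφ]
  linarith
end
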